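/- The Pitman transform W on pairs of cadlag functions with nonnegative jumps is idempotent: W(W(f₁,f₂)) = W(f₁,f₂), and its image is exactly the set of Pitman ordered pairs, i.e., pairs (g₁,g₂) with g₂(t) ≤ g₁(t⁻) for all t. -/

import Mathlib

open Filter Set

/-- Left limit with the convention `f(0⁻) = 0`. -/
noncomputable def lml (f : ℝ → ℝ) (z : ℝ) : ℝ := if z ≤ 0 then 0 else Function.leftLim f z

/-- Cadlag on `[0, ∞)`: right-continuous at every `x ≥ 0`, left limits exist at every `x > 0`. -/
def Cadlag (f : ℝ → ℝ) : Prop :=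
  (∀ x : ℝ, 0 ≤ x → ContinuousWithinAt f (Set.Ici x) x) ∧
  (∀ x : ℝ, 0 < x → ∃ l : ℝ, Filter.Tendsto f (nhdsWithin x (Set.Iio x)) (nhds l))

/-- All jumps are nonnegative (with the convention `f(0⁻) = 0`). -/
def NonnegJumps (f : ℝ → ℝ) : Prop := ∀ z : ℝ, 0 ≤ z → lml f z ≤ f z

/-- `S f₁ f₂ x y = sup_{z ∈ [x,y]} (f₂ z - f₁ (z⁻))`. -/
noncomputable def S (f₁ f₂ : ℝ → ℝ) (x y : ℝ) : ℝ :=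
  sSup ((fun z => f₂ z - lml f₁ z) '' Set.Icc x y)

/-- `Sm f₁ f₂ x y = sup_{z ∈ [x,y)} (f₂ z - f₁ (z⁻))`. -/
noncomputable def Sm (f₁ f₂ : ℝ → ℝ) (x y : ℝ) : ℝ :=
  sSup ((fun z => f₂ z - lml f₁ z) '' Set.Ico x y)

/-- First component of the Pitman transform. -/
noncomputable def Wp1 (f₁ f₂ : ℝ → ℝ) : ℝ → ℝ := fun t => f₁ t + S f₁ f₂ 0 t

/-- Second component of the Pitman transform. -/
noncomputable def Wp2 (f₁ f₂ : ℝ → ℝ) : ℝ → ℝ := fun t => f₂ t - S f₁ f₂ 0 t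

/-!
The transformed pair is Pitman ordered: `S(0,t)` dominates `f₂ t - f₁ (t⁻)`, while the left
limit of `S(0,·)` at `t` is the supremum over `[0,t)`, which is at least `f₂ 0 ≥ 0`. Conversely,
for a Pitman ordered pair `(g₁, g₂)` with `g₂ 0 = 0` every `g₂ z - g₁ (z⁻)` is `≤ 0` and the value
at `z = 0` is `0`, so `S(0,t) = 0` and `W` fixes the pair. Applied to `W(f₁,f₂)` this is
idempotence, and applied to an arbitrary ordered pair it shows that the pair lies in the image.
-/

open Topology Bornology

def PitmanOrdered (g₁ g₂ : ℝ → ℝ) : Prop := ∀ t : ℝ, 0 ≤ t → g₂ t ≤ lml g₁ t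

@[simp]
lemma lml_zero (f : ℝ → ℝ) : lml f 0 = 0 := if_pos le_rfl

lemma NonnegJumps.nonneg_zero {f : ℝ → ℝ} (hf : NonnegJumps f) : 0 ≤ f 0 := by
  simpa using hf 0 le_rfl

lemma lml_eq_of_tendsto {f : ℝ → ℝ} {t l : ℝ} (ht : 0 < t)
    (hf : Tendsto f (𝓝[<] t) (𝓝 l)) : lml f t = l := by
  rw [lml, if_neg ht.not_ge, leftLim_eq_of_tendsto hf]

lemma Cadlag.tendsto_lml {f : ℝ → ℝ} (hf : Cadlag f) {t : ℝ} (ht : 0 < t) :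
    Tendsto f (𝓝[<] t) (𝓝 (lml f t)) := by
  obtain ⟨l, hl⟩ := hf.2 t ht
  rwa [lml_eq_of_tendsto ht hl]

lemma Cadlag.isBounded_image_Icc {f : ℝ → ℝ} (hf : Cadlag f) (t : ℝ) :
    IsBounded (f '' Icc 0 t) := by
  refine isCompact_Icc.induction_on (p := fun U => IsBounded (f '' U)) (by simp)
    (fun U V hUV hV => hV.subset (image_mono hUV))
    (fun U V hU hV => by rw [image_union]; exact hU.union hV) fun x hx => ?_
  obtain ⟨V, hV, hVb⟩ := Metric.exists_isBounded_image_of_tendsto (hf.1 x hx.1).tendsto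
  rcases hx.1.eq_or_lt with rfl | hx0
  · exact ⟨V, nhdsWithin_mono _ Icc_subset_Ici_self hV, hVb⟩
  obtain ⟨l, hl⟩ := hf.2 x hx0
  obtain ⟨U, hU, hUb⟩ := Metric.exists_isBounded_image_of_tendsto hl
  refine ⟨U ∪ V, mem_nhdsWithin_of_mem_nhds ?_, by rw [image_union]; exact hUb.union hVb⟩
  rw [← nhdsLT_sup_nhdsGE]
  exact union_mem_sup hU hV

lemma Cadlag.bddBelow_lml_image_Icc {f : ℝ → ℝ} (hf : Cadlag f) (t : ℝ) :
    BddBelow (lml f '' Icc 0 t) := by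
  obtain ⟨m, hm⟩ := (hf.isBounded_image_Icc t).bddBelow
  refine ⟨min m 0, forall_mem_image.2 fun z hz => ?_⟩
  rcases hz.1.eq_or_lt with rfl | hz0
  · simp
  refine ge_of_tendsto (hf.tendsto_lml hz0) ?_
  filter_upwards [Ioo_mem_nhdsLT hz0] with y hy
  exact (min_le_left _ _).trans (hm (mem_image_of_mem f ⟨hy.1.le, hy.2.le.trans hz.2⟩))

lemma bddAbove_sub_lml_image_Icc {f₁ f₂ : ℝ → ℝ} (h₁ : Cadlag f₁) (h₂ : Cadlag f₂) (t : ℝ) :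
    BddAbove ((fun z => f₂ z - lml f₁ z) '' Icc 0 t) := by
  obtain ⟨a, ha⟩ := (h₂.isBounded_image_Icc t).bddAbove
  obtain ⟨b, hb⟩ := h₁.bddBelow_lml_image_Icc t
  exact ⟨a - b, forall_mem_image.2 fun z hz =>
    sub_le_sub (ha (mem_image_of_mem _ hz)) (hb (mem_image_of_mem _ hz))⟩

lemma tendsto_csSup_image_Icc_nhdsLT {α β : Type*} [LinearOrder α] [TopologicalSpace α]
    [OrderTopology α] [ConditionallyCompleteLinearOrder β] [TopologicalSpace β] [OrderTopology β]
    {φ : α → β} {a t : α} (hat : a < t) (hφ : BddAbove (φ '' Ico a t)) :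
    Tendsto (fun u => sSup (φ '' Icc a u)) (𝓝[<] t) (𝓝 (sSup (φ '' Ico a t))) := by
  rw [tendsto_order]
  constructor
  · intro b hb
    obtain ⟨_, ⟨z, hz, rfl⟩, hbz⟩ := exists_lt_of_lt_csSup (Nonempty.image φ (nonempty_Ico.2 hat)) hb
    filter_upwards [Ioo_mem_nhdsLT hz.2] with u hu
    have hbdd : BddAbove (φ '' Icc a u) := hφ.mono (image_mono (Icc_subset_Ico_right hu.2))
    exact hbz.trans_le (le_csSup hbdd (mem_image_of_mem φ ⟨hz.1, hu.1.le⟩))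
  · intro b hb
    filter_upwards [Ioo_mem_nhdsLT hat] with u hu
    exact (csSup_le_csSup hφ (Nonempty.image φ (nonempty_Icc.2 hu.1.le))
      (image_mono (Icc_subset_Ico_right hu.2))).trans_lt hb

lemma S_zero_zero (f₁ f₂ : ℝ → ℝ) : S f₁ f₂ 0 0 = f₂ 0 := by
  simp [S]

lemma Wp2_zero (f₁ f₂ : ℝ → ℝ) : Wp2 f₁ f₂ 0 = 0 := by
  simp [Wp2, S_zero_zero]

lemma lml_Wp1 {f₁ f₂ : ℝ → ℝ} (h₁ : Cadlag f₁) (h₂ : Cadlag f₂) {t : ℝ} (ht : 0 < t) :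
    lml (Wp1 f₁ f₂) t = lml f₁ t + Sm f₁ f₂ 0 t :=
  lml_eq_of_tendsto ht <| (h₁.tendsto_lml ht).add <| tendsto_csSup_image_Icc_nhdsLT ht <|
    (bddAbove_sub_lml_image_Icc h₁ h₂ t).mono (image_mono Ico_subset_Icc_self)

lemma pitmanOrdered_Wp {f₁ f₂ : ℝ → ℝ} (h₁ : Cadlag f₁) (h₂ : Cadlag f₂) (hf₂ : 0 ≤ f₂ 0) :
    PitmanOrdered (Wp1 f₁ f₂) (Wp2 f₁ f₂) := by
  intro t ht
  rcases ht.eq_or_lt with rfl | ht0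
  · simp [Wp2_zero]
  have hbdd := bddAbove_sub_lml_image_Icc h₁ h₂ t
  have hS : f₂ t - lml f₁ t ≤ S f₁ f₂ 0 t := le_csSup hbdd (mem_image_of_mem _ ⟨ht, le_rfl⟩)
  have hSm : f₂ 0 - lml f₁ 0 ≤ Sm f₁ f₂ 0 t :=
    le_csSup (hbdd.mono (image_mono Ico_subset_Icc_self)) (mem_image_of_mem _ ⟨le_rfl, ht0⟩)
  rw [lml_zero, sub_zero] at hSm
  rw [lml_Wp1 h₁ h₂ ht0, Wp2]
  linarith

lemma PitmanOrdered.S_eq_zero {g₁ g₂ : ℝ → ℝ} (hg : PitmanOrdered g₁ g₂) (hg₂ : 0 ≤ g₂ 0)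
    {t : ℝ} (ht : 0 ≤ t) : S g₁ g₂ 0 t = 0 := by
  have hle : ∀ y ∈ (fun z => g₂ z - lml g₁ z) '' Icc 0 t, y ≤ 0 :=
    forall_mem_image.2 fun z hz => sub_nonpos.2 (hg z hz.1)
  have hzero : g₂ 0 - lml g₁ 0 = 0 := by
    have := hg 0 le_rfl
    rw [lml_zero] at this ⊢
    linarith
  refine le_antisymm (csSup_le ⟨_, mem_image_of_mem _ ⟨le_rfl, ht⟩⟩ hle) ?_
  exact hzero.ge.trans <| le_csSup ⟨0, hle⟩ (mem_image_of_mem _ ⟨le_rfl, ht⟩)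

lemma PitmanOrdered.Wp_eq_self {g₁ g₂ : ℝ → ℝ} (hg : PitmanOrdered g₁ g₂) (hg₂ : 0 ≤ g₂ 0)
    {t : ℝ} (ht : 0 ≤ t) : Wp1 g₁ g₂ t = g₁ t ∧ Wp2 g₁ g₂ t = g₂ t := by
  simp [Wp1, Wp2, hg.S_eq_zero hg₂ ht]

theorem stmt6 :
    (∀ f₁ f₂ : ℝ → ℝ, Cadlag f₁ → Cadlag f₂ → NonnegJumps f₁ → NonnegJumps f₂ →
      (∀ t : ℝ, 0 ≤ t →
          Wp1 (Wp1 f₁ f₂) (Wp2 f₁ f₂) t = Wp1 f₁ f₂ t ∧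
          Wp2 (Wp1 f₁ f₂) (Wp2 f₁ f₂) t = Wp2 f₁ f₂ t) ∧
      (∀ t : ℝ, 0 ≤ t → Wp2 f₁ f₂ t ≤ lml (Wp1 f₁ f₂) t)) ∧
    (∀ g₁ g₂ : ℝ → ℝ, Cadlag g₁ → Cadlag g₂ → NonnegJumps g₁ → NonnegJumps g₂ →
      (∀ t : ℝ, 0 ≤ t → g₂ t ≤ lml g₁ t) →
      ∃ f₁ f₂ : ℝ → ℝ, Cadlag f₁ ∧ Cadlag f₂ ∧ NonnegJumps f₁ ∧ NonnegJumps f₂ ∧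
        ∀ t : ℝ, 0 ≤ t → Wp1 f₁ f₂ t = g₁ t ∧ Wp2 f₁ f₂ t = g₂ t) := by
  refine ⟨fun f₁ f₂ h₁ h₂ _ j₂ => ?_, fun g₁ g₂ h₁ h₂ j₁ j₂ hg => ?_⟩
  · have hW : PitmanOrdered (Wp1 f₁ f₂) (Wp2 f₁ f₂) := pitmanOrdered_Wp h₁ h₂ j₂.nonneg_zero
    exact ⟨fun t ht => hW.Wp_eq_self (Wp2_zero f₁ f₂).ge ht, hW⟩
  · exact ⟨g₁, g₂, h₁, h₂, j₁, j₂, fun t ht => PitmanOrdered.Wp_eq_self hg j₂.nonneg_zero ht⟩
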